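/- arXiv:1405.3436 — 2 statements merged into one kernel-verified Lean document; each statement's English description precedes it below -/
import Mathlib

section
/- Let D be a Steiner triple system on v points (a (v,3,1)-design). Then γ(D) ≤ v - √(v/2), i.e., (γ(D) : ℝ) ≤ v - Real.sqrt (v/2). -/
open Finset

variable {α ι : Type*}

/-- The incidence (Levi) graph of the block family `B` indexed by `ι` over point set `α`:
a bipartite graph where point `p` is adjacent to block `i` iff `p ∈ B i`. -/
def incGraph (B : ι → Finset α) : SimpleGraph (α ⊕ ι) where
  Adj x y :=
    (∃ p i, x = Sum.inl p ∧ y = Sum.inr i ∧ p ∈ B i) ∨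
    (∃ p i, x = Sum.inr i ∧ y = Sum.inl p ∧ p ∈ B i)
  symm := by
    constructor
    rintro x y (⟨p, i, rfl, rfl, h⟩ | ⟨p, i, rfl, rfl, h⟩)
    · exact Or.inr ⟨p, i, rfl, rfl, h⟩
    · exact Or.inl ⟨p, i, rfl, rfl, h⟩
  loopless := by
    constructor
    rintro x (⟨p, i, rfl, h, -⟩ | ⟨p, i, rfl, h, -⟩) <;> simp at h

/-- A dominating set of vertices in a graph: every vertex not in `S` has a neighbour in `S`. -/
def IsDomSet {V : Type*} (G : SimpleGraph V) (S : Finset V) : Prop :=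
  ∀ v ∉ S, ∃ s ∈ S, G.Adj v s

/-- The domination number of a graph: the minimum size of a dominating set. -/
noncomputable def domNum {V : Type*} (G : SimpleGraph V) : ℕ :=
  sInf {n | ∃ S : Finset V, IsDomSet G S ∧ S.card = n}

/-!
Take an independent set `A` of `2m` points, `2m² < v`, built greedily: a point can be added
unless it lies in `A` or is the third point of a block meeting `A` twice. Let `c` be the third
point of a block meeting `A` twice and `R = A ∪ {c}`. The blocks inside `R` all pass through `c`
and pair up points of `A`; pairing the rest of `A` arbitrarily, `m` blocks cover `R` and include
every block inside `R`. These blocks together with the `v - 2m - 1` points outside `R` dominate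
the incidence graph, so `γ ≤ v - (m + 1) ≤ v - √(v/2)` for `m = ⌊√((v - 1)/2)⌋`.
-/

theorem incGraph_adj_inl_inr (B : ι → Finset α) (p : α) (i : ι) :
    (incGraph B).Adj (Sum.inl p) (Sum.inr i) ↔ p ∈ B i := by
  simp [incGraph]

theorem incGraph_adj_inr_inl (B : ι → Finset α) (p : α) (i : ι) :
    (incGraph B).Adj (Sum.inr i) (Sum.inl p) ↔ p ∈ B i := by
  simp [incGraph]

theorem domNum_le_card {V : Type*} {G : SimpleGraph V} {S : Finset V} (hS : IsDomSet G S) :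
    domNum G ≤ #S :=
  Nat.sInf_le ⟨S, hS, rfl⟩

theorem domNum_incGraph_add_card_le [Fintype α] (B : ι → Finset α) (R : Finset α)
    (F : Finset ι) (hcover : ∀ x ∈ R, ∃ i ∈ F, x ∈ B i) (hclosed : ∀ i, B i ⊆ R → i ∈ F) :
    domNum (incGraph B) + #R ≤ Fintype.card α + #F := by
  classical
  have hdom : IsDomSet (incGraph B) (Rᶜ.disjSum F) := by
    rintro (x | i) hw
    · obtain ⟨i, hiF, hxi⟩ := hcover x (by simpa using hw)
      exact ⟨Sum.inr i, by simpa using hiF, (incGraph_adj_inl_inr B x i).2 hxi⟩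
    · obtain ⟨x, hxi, hxR⟩ := not_subset.1 fun h => hw (by simpa using hclosed i h)
      exact ⟨Sum.inl x, by simpa using hxR, (incGraph_adj_inr_inl B x i).2 hxi⟩
  have := domNum_le_card hdom
  rw [card_disjSum] at this
  have := card_compl_add_card R
  omega

def IsIndependent (B : ι → Finset α) (A : Finset α) : Prop :=
  ∀ i, ¬ B i ⊆ A

theorem exists_card_le_forall_mem_cover [DecidableEq α] (B : ι → Finset α)
    (hB : ∀ x y : α, x ≠ y → ∃ i, x ∈ B i ∧ y ∈ B i) :
    ∀ (n : ℕ) (W : Finset α), #W = 2 * n → ∃ F : Finset ι, #F ≤ n ∧ ∀ x ∈ W, ∃ i ∈ F, x ∈ B i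
  | 0, W, hW => ⟨∅, by simp, by simp_all⟩
  | n + 1, W, hW => by
    classical
    obtain ⟨x, hx, y, hy, hxy⟩ := one_lt_card.1 (by omega : 1 < #W)
    obtain ⟨i, hxi, hyi⟩ := hB x y hxy
    have hxyW : {x, y} ⊆ W := insert_subset hx (singleton_subset_iff.2 hy)
    have hrest : #(W \ {x, y}) = 2 * n := by
      rw [card_sdiff_of_subset hxyW, card_pair hxy]; omega
    obtain ⟨F, hF, hcover⟩ := exists_card_le_forall_mem_cover B hB n _ hrest
    refine ⟨insert i F, (card_insert_le _ _).trans (by omega), fun z hz => ?_⟩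
    by_cases hzxy : z = x ∨ z = y
    · exact ⟨i, mem_insert_self _ _, by rcases hzxy with rfl | rfl <;> assumption⟩
    · obtain ⟨j, hj, hzj⟩ := hcover z (by simp_all)
      exact ⟨j, mem_insert_of_mem hj, hzj⟩

structure IsSteinerTripleSystem [Fintype ι] [DecidableEq α] (B : ι → Finset α) : Prop where
  card_eq_three : ∀ i, #(B i) = 3
  card_filter_mem_mem : ∀ x y : α, x ≠ y → #{i | x ∈ B i ∧ y ∈ B i} = 1

namespace IsSteinerTripleSystem

variable [Fintype ι] [DecidableEq α] {B : ι → Finset α} (hB : IsSteinerTripleSystem B)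
include hB

theorem exists_mem_mem {x y : α} (hxy : x ≠ y) : ∃ i, x ∈ B i ∧ y ∈ B i := by
  obtain ⟨i, hi⟩ := card_eq_one.1 (hB.card_filter_mem_mem x y hxy)
  have : i ∈ ({i | x ∈ B i ∧ y ∈ B i} : Finset ι) := hi ▸ mem_singleton_self i
  exact ⟨i, by simpa using this⟩

theorem eq_of_mem_of_mem {x y : α} (hxy : x ≠ y) {i j : ι} (hxi : x ∈ B i) (hyi : y ∈ B i)
    (hxj : x ∈ B j) (hyj : y ∈ B j) : i = j :=
  card_le_one.1 (hB.card_filter_mem_mem x y hxy).le i (by simp [hxi, hyi]) j (by simp [hxj, hyj])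

theorem eq_triple {x y z : α} {i : ι} (hxy : x ≠ y) (hxz : x ≠ z) (hyz : y ≠ z)
    (hx : x ∈ B i) (hy : y ∈ B i) (hz : z ∈ B i) : B i = {x, y, z} :=
  (eq_of_subset_of_card_le (by simp [insert_subset_iff, hx, hy, hz])
    (by rw [hB.card_eq_three, Finset.card_eq_three.2 ⟨x, y, z, hxy, hxz, hyz, rfl⟩])).symm

theorem card_filter_card_inter_eq_two_le (A : Finset α) :
    #{i | #(B i ∩ A) = 2} ≤ (#A).choose 2 := by
  rw [← card_powersetCard]
  refine card_le_card_of_injOn (fun i => B i ∩ A) (fun i hi => ?_) fun i hi j hj hij => ?_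
  · simpa [mem_powersetCard] using hi
  · replace hi : #(B i ∩ A) = 2 := by simpa using hi
    obtain ⟨x, y, hxy, hxyi⟩ := card_eq_two.1 hi
    have hxyj : B j ∩ A = {x, y} := (show B i ∩ A = B j ∩ A from hij).symm.trans hxyi
    have hxyi' : {x, y} ⊆ B i := hxyi ▸ inter_subset_left
    have hxyj' : {x, y} ⊆ B j := hxyj ▸ inter_subset_left
    simp only [insert_subset_iff, singleton_subset_iff] at hxyi' hxyj'
    exact hB.eq_of_mem_of_mem hxy hxyi'.1 hxyi'.2 hxyj'.1 hxyj'.2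

theorem exists_insert_isIndependent [Fintype α] {A : Finset α} (hA : IsIndependent B A)
    (hcard : #A + (#A).choose 2 < Fintype.card α) :
    ∃ x ∉ A, IsIndependent B (insert x A) := by
  set bad := A ∪ ({i | #(B i ∩ A) = 2} : Finset ι).biUnion fun i => B i \ A
  have hbad : #bad < Fintype.card α := by
    refine (card_union_le _ _).trans_lt (lt_of_le_of_lt (Nat.add_le_add_left ?_ _) hcard)
    refine card_biUnion_le.trans ((sum_le_card_nsmul _ _ 1 fun i hi => ?_).trans ?_)
    · have := card_inter_add_card_sdiff (B i) A
      simp only [mem_filter, mem_univ, true_and] at hi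
      rw [hB.card_eq_three] at this
      omega
    · simpa using hB.card_filter_card_inter_eq_two_le A
  obtain ⟨x, -, hx⟩ := exists_mem_notMem_of_card_lt_card (t := univ) (by simpa using hbad)
  have hxA : x ∉ A := fun h => hx (mem_union_left _ h)
  refine ⟨x, hxA, fun i hi => ?_⟩
  have hxi : x ∈ B i := by
    by_contra hxi
    exact hA i fun z hz => (mem_insert.1 (hi hz)).resolve_left (by rintro rfl; exact hxi hz)
  have htwo : #(B i ∩ A) = 2 := by
    have hsub : B i ∩ A = (B i).erase x := by
      ext z
      have := @hi z
      simp only [mem_inter, mem_erase, mem_insert] at this ⊢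
      grind
    rw [hsub, card_erase_of_mem hxi, hB.card_eq_three]
  exact hx (mem_union_right _ (mem_biUnion.2 ⟨i, by simpa using htwo, mem_sdiff.2 ⟨hxi, hxA⟩⟩))

theorem exists_isIndependent_card [Fintype α] (n : ℕ) (hn : n.choose 2 < Fintype.card α) :
    ∃ A : Finset α, #A = n ∧ IsIndependent B A := by
  induction n with
  | zero => exact ⟨∅, rfl, fun i h => by simpa [hB.card_eq_three i] using card_le_card h⟩
  | succ n ih =>
    obtain ⟨A, hAn, hA⟩ := ih ((Nat.choose_le_choose 2 n.le_succ).trans_lt hn)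
    obtain ⟨x, hxA, hxA'⟩ := hB.exists_insert_isIndependent hA
      (by rw [hAn]; rwa [Nat.choose_succ_succ', Nat.choose_one_right] at hn)
    exact ⟨insert x A, by rw [card_insert_of_notMem hxA, hAn], hxA'⟩

theorem card_biUnion_erase {c : α} {T : Finset ι} (hT : ∀ i ∈ T, c ∈ B i) :
    #(T.biUnion fun i => (B i).erase c) = 2 * #T := by
  have hdisj : (T : Set ι).PairwiseDisjoint fun i => (B i).erase c := by
    intro i hi j hj hij
    refine disjoint_left.2 fun z hzi hzj => hij ?_
    obtain ⟨hzc, hzi⟩ := mem_erase.1 hzi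
    exact hB.eq_of_mem_of_mem hzc hzi (hT i hi) (mem_erase.1 hzj).2 (hT j hj)
  rw [card_biUnion hdisj, sum_congr rfl fun i hi => by rw [card_erase_of_mem (hT i hi),
    hB.card_eq_three], sum_const, smul_eq_mul, mul_comm]

theorem exists_cover_insert {A : Finset α} (hA : IsIndependent B A) {m : ℕ} (hAm : #A = 2 * m)
    (hm : 1 ≤ m) :
    ∃ c ∉ A, ∃ F : Finset ι, #F ≤ m ∧ (∀ x ∈ insert c A, ∃ i ∈ F, x ∈ B i) ∧
      ∀ i, B i ⊆ insert c A → i ∈ F := by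
  classical
  obtain ⟨x, hx, y, hy, hxy⟩ := one_lt_card.1 (by omega : 1 < #A)
  obtain ⟨i₀, hxi₀, hyi₀⟩ := hB.exists_mem_mem hxy
  obtain ⟨c, hci₀, hcA⟩ := not_subset.1 (hA i₀)
  have hi₀ : B i₀ ⊆ insert c A := by
    rw [hB.eq_triple hxy (by rintro rfl; exact hcA hx) (by rintro rfl; exact hcA hy) hxi₀ hyi₀
      hci₀]
    simp [insert_subset_iff, hx, hy]
  set T : Finset ι := {i | c ∈ B i ∧ B i ⊆ insert c A}
  set U := T.biUnion fun i => (B i).erase c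
  have hUA : U ⊆ A := by
    refine biUnion_subset.2 fun i hi z hz => ?_
    obtain ⟨hzc, hzi⟩ := mem_erase.1 hz
    exact (mem_insert.1 ((mem_filter.1 hi).2.2 hzi)).resolve_left hzc
  have hU : #U = 2 * #T := hB.card_biUnion_erase fun i hi => (mem_filter.1 hi).2.1
  have hTm : #T ≤ m := by
    have := card_le_card hUA
    omega
  obtain ⟨F, hF, hcover⟩ := exists_card_le_forall_mem_cover B (fun _ _ => hB.exists_mem_mem)
    (m - #T) (A \ U) (by rw [card_sdiff_of_subset hUA]; omega)
  refine ⟨c, hcA, T ∪ F, (card_union_le _ _).trans (by omega), fun z hz => ?_, fun i hi => ?_⟩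
  · obtain rfl | hzA := mem_insert.1 hz
    · exact ⟨i₀, mem_union_left _ (by simp [T, hci₀, hi₀]), hci₀⟩
    by_cases hzU : z ∈ U
    · obtain ⟨i, hiT, hzi⟩ := mem_biUnion.1 hzU
      exact ⟨i, mem_union_left _ hiT, mem_of_mem_erase hzi⟩
    · obtain ⟨i, hiF, hzi⟩ := hcover z (mem_sdiff.2 ⟨hzA, hzU⟩)
      exact ⟨i, mem_union_right _ hiF, hzi⟩
  · have hci : c ∈ B i := by
      by_contra hci
      exact hA i fun z hz => (mem_insert.1 (hi hz)).resolve_left (by rintro rfl; exact hci hz)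
    exact mem_union_left _ (by simp [T, hci, hi])

theorem domNum_add_le_of_isIndependent [Fintype α] {A : Finset α} (hA : IsIndependent B A)
    {m : ℕ} (hAm : #A = 2 * m) (hm : 1 ≤ m) :
    domNum (incGraph B) + (m + 1) ≤ Fintype.card α := by
  obtain ⟨c, hcA, F, hF, hcover, hclosed⟩ := hB.exists_cover_insert hA hAm hm
  have := domNum_incGraph_add_card_le B _ F hcover hclosed
  rw [card_insert_of_notMem hcA] at this
  omega

end IsSteinerTripleSystem

theorem sqrt_half_le_sqrt_pred_half_add_one (v : ℕ) :
    √((v : ℝ) / 2) ≤ Nat.sqrt ((v - 1) / 2) + 1 := by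
  have h : (v - 1) / 2 < (Nat.sqrt ((v - 1) / 2) + 1) ^ 2 := Nat.lt_succ_sqrt' _
  have hv : v ≤ 2 * (Nat.sqrt ((v - 1) / 2) + 1) ^ 2 := by omega
  rw [Real.sqrt_le_left (by positivity), div_le_iff₀ two_pos, mul_comm]
  exact_mod_cast hv

/-- For a Steiner triple system on `v` points (a `(v,3,1)`-design),
`γ(D) ≤ v - √(v/2)`. -/
theorem stmt15 [Fintype α] [Fintype ι] [DecidableEq α]
    (B : ι → Finset α) (v : ℕ)
    (hv : Fintype.card α = v) (hkv : 3 < v)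
    (hblock : ∀ i, (B i).card = 3)
    (hpair : ∀ x y : α, x ≠ y →
      (Finset.univ.filter fun i => x ∈ B i ∧ y ∈ B i).card = 1) :
    (domNum (incGraph B) : ℝ) ≤ (v : ℝ) - Real.sqrt ((v : ℝ) / 2) := by
  have hB : IsSteinerTripleSystem B := ⟨hblock, hpair⟩
  set m := Nat.sqrt ((v - 1) / 2)
  have hm : 1 ≤ m := Nat.le_sqrt.2 (by omega)
  have hmv : 2 * m ^ 2 < v := by
    have : m ^ 2 ≤ (v - 1) / 2 := Nat.sqrt_le' _
    omega
  have hchoose : (2 * m).choose 2 ≤ 2 * m ^ 2 := by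
    rw [Nat.choose_two_right]
    exact Nat.div_le_of_le_mul <| (Nat.mul_le_mul_left _ (Nat.sub_le _ 1)).trans_eq (by ring)
  obtain ⟨A, hAm, hA⟩ := hB.exists_isIndependent_card (2 * m) (hv ▸ hchoose.trans_lt hmv)
  have hdom : (domNum (incGraph B) + (m + 1) : ℝ) ≤ v := by
    exact_mod_cast hv ▸ hB.domNum_add_le_of_isIndependent hA hAm hm
  have := sqrt_half_le_sqrt_pred_half_add_one v
  linarith
end

section
/- Let D be a symmetric (v,k,λ)-design, i.e., a (v,k,λ)-design whose number of blocks b equals v. Then γ(D) ≤ 2(k - 1). -/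
open Finset

variable {α ι : Type*}

/-!
Fix a block `B₀` and a point `p ∈ B₀`. The points of `B₀ \ {p}` together with the blocks other
than `B₀` through `p` dominate the incidence graph: a point `x ∉ B₀` shares a block with `p`, and
that block is not `B₀`; a block not through `p` meets `B₀` in `λ ≥ 1` points, none of them `p`.
Counting flags through a point `x` gives `r_x (k - 1) = (v - 1) λ`, so all replication numbers
agree, and `v r = b k` with `b = v` gives `r = k`; hence the set has `2(k - 1)` elements.
That two blocks meet in exactly `λ` points is the classical variance argument: over the `v - 1`
blocks `B ≠ B₀`, the numbers `|B₀ ∩ B|` have mean `λ` and second moment `λ²`.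
-/

theorem Finset.eq_of_sum_eq_of_sum_sq_eq {T : Finset ι} {a : ι → ℕ} {c : ℕ}
    (h₁ : ∑ j ∈ T, a j = #T * c) (h₂ : ∑ j ∈ T, a j ^ 2 = #T * c ^ 2) :
    ∀ j ∈ T, a j = c := by
  have h₁' : ∑ j ∈ T, (a j : ℤ) = #T * c := by exact_mod_cast h₁
  have h₂' : ∑ j ∈ T, (a j : ℤ) ^ 2 = #T * c ^ 2 := by exact_mod_cast h₂
  have hvar : ∑ j ∈ T, ((a j : ℤ) - c) ^ 2 = 0 := by
    simp only [sub_sq, sum_add_distrib, sum_sub_distrib, ← sum_mul, ← mul_sum, sum_const,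
      nsmul_eq_mul]
    linear_combination h₂' - 2 * (c : ℤ) * h₁'
  intro j hj
  have := (sum_eq_zero_iff_of_nonneg fun j _ => sq_nonneg ((a j : ℤ) - c)).mp hvar j hj
  exact_mod_cast sub_eq_zero.mp (pow_eq_zero_iff two_ne_zero |>.mp this)

section Incidence

variable [DecidableEq α] (B : ι → Finset α)

theorem sum_card_inter_eq_sum_card_filter_mem (T : Finset ι) (s : Finset α) :
    ∑ i ∈ T, #(s ∩ B i) = ∑ x ∈ s, #{i ∈ T | x ∈ B i} := by
  simpa [bipartiteAbove, bipartiteBelow, filter_mem_eq_inter] using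
    (sum_card_bipartiteAbove_eq_sum_card_bipartiteBelow (s := s) (t := T)
      (r := fun x i => x ∈ B i)).symm

variable [Fintype ι]

theorem card_filter_univ_erase [DecidableEq ι] (P : ι → Prop) [DecidablePred P] {i : ι}
    (hi : P i) : #{j ∈ univ.erase i | P j} = #{j | P j} - 1 := by
  rw [filter_erase, card_erase_of_mem (by simpa using hi)]

structure IsDesign (k l : ℕ) : Prop where
  card_block : ∀ i, #(B i) = k
  card_filter_mem_and_mem : ∀ x y : α, x ≠ y → #{i | x ∈ B i ∧ y ∈ B i} = l

namespace IsDesign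

variable {B} [Fintype α] {k l : ℕ}

theorem card_filter_mem_mul (hD : IsDesign B k l) (x : α) :
    #{i | x ∈ B i} * (k - 1) = (Fintype.card α - 1) * l := by
  have hcount := sum_card_inter_eq_sum_card_filter_mem B {i | x ∈ B i} (univ.erase x)
  calc #{i | x ∈ B i} * (k - 1) = ∑ i ∈ {i | x ∈ B i}, #(univ.erase x ∩ B i) := by
        refine (sum_const_nat fun i hi => ?_).symm
        rw [erase_inter, univ_inter, card_erase_of_mem (mem_filter.mp hi).2, hD.card_block]
    _ = ∑ y ∈ univ.erase x, #{i ∈ {i | x ∈ B i} | y ∈ B i} := hcount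
    _ = (Fintype.card α - 1) * l := by
        rw [sum_const_nat fun y hy => ?_, card_erase_of_mem (mem_univ x), card_univ]
        rw [filter_filter, hD.card_filter_mem_and_mem x y (ne_of_mem_erase hy).symm]

theorem card_filter_mem (hD : IsDesign B k l) (hk : 2 ≤ k)
    (hsym : Fintype.card ι = Fintype.card α) (x : α) : #{i | x ∈ B i} = k := by
  have hr : ∀ y, #{i | y ∈ B i} = #{i | x ∈ B i} := fun y =>
    Nat.eq_of_mul_eq_mul_right (by omega)
      ((hD.card_filter_mem_mul y).trans (hD.card_filter_mem_mul x).symm)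
  have hcount := sum_card_inter_eq_sum_card_filter_mem B univ univ
  simp only [univ_inter, hD.card_block, hr, sum_const, card_univ, smul_eq_mul, hsym] at hcount
  exact (Nat.eq_of_mul_eq_mul_left (Fintype.card_pos_iff.mpr ⟨x⟩) hcount).symm

theorem card_sub_one_mul_eq [Nonempty α] (hD : IsDesign B k l) (hk : 2 ≤ k)
    (hsym : Fintype.card ι = Fintype.card α) : (Fintype.card α - 1) * l = k * (k - 1) := by
  obtain ⟨x⟩ := ‹Nonempty α›
  rw [← hD.card_filter_mem_mul x, hD.card_filter_mem hk hsym x]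

theorem sum_card_filter_univ_erase_mem_and_mem [DecidableEq ι] (hD : IsDesign B k l) (hk : 2 ≤ k)
    (hl : 1 ≤ l) (hsym : Fintype.card ι = Fintype.card α) {i : ι} {x : α} (hx : x ∈ B i) :
    ∑ y ∈ B i, #{j ∈ univ.erase i | x ∈ B j ∧ y ∈ B j} = (k - 1) * l := by
  have hdiag : #{j ∈ univ.erase i | x ∈ B j ∧ x ∈ B j} = k - 1 := by
    simp only [and_self]
    rw [card_filter_univ_erase (x ∈ B ·) hx, hD.card_filter_mem hk hsym]
  have hoff : ∀ y ∈ (B i).erase x, #{j ∈ univ.erase i | x ∈ B j ∧ y ∈ B j} = l - 1 :=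
    fun y hy => by
      rw [card_filter_univ_erase (fun j => x ∈ B j ∧ y ∈ B j) ⟨hx, mem_of_mem_erase hy⟩,
        hD.card_filter_mem_and_mem x y (ne_of_mem_erase hy).symm]
  rw [← add_sum_erase _ _ hx, hdiag, sum_const_nat hoff, card_erase_of_mem hx, hD.card_block,
    add_comm, ← Nat.mul_succ, Nat.succ_eq_add_one, Nat.sub_add_cancel hl]

theorem card_inter_eq [DecidableEq ι] (hD : IsDesign B k l) (hk : 2 ≤ k) (hl : 1 ≤ l)
    (hsym : Fintype.card ι = Fintype.card α) {i j : ι} (hij : i ≠ j) : #(B i ∩ B j) = l := by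
  obtain ⟨x, hx⟩ : (B i).Nonempty := card_pos.mp (by rw [hD.card_block]; omega)
  have : Nonempty α := ⟨x⟩
  have hC := hD.card_sub_one_mul_eq hk hsym
  set T : Finset ι := univ.erase i
  have hT : #T = Fintype.card α - 1 := by rw [card_erase_of_mem (mem_univ i), card_univ, hsym]
  refine eq_of_sum_eq_of_sum_sq_eq (T := T) (a := fun j => #(B i ∩ B j)) ?_ ?_ j
    (by simp [T, hij.symm])
  · calc ∑ j ∈ T, #(B i ∩ B j) = ∑ x ∈ B i, #{j ∈ T | x ∈ B j} :=
          sum_card_inter_eq_sum_card_filter_mem B T (B i)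
      _ = k * (k - 1) := by
          rw [sum_const_nat fun x hx => ?_, hD.card_block]
          rw [card_filter_univ_erase (x ∈ B ·) hx, hD.card_filter_mem hk hsym]
      _ = #T * l := by rw [hT, hC]
  · calc ∑ j ∈ T, #(B i ∩ B j) ^ 2 = ∑ j ∈ T, #((B i ×ˢ B i) ∩ (B j ×ˢ B j)) := by
          simp only [product_inter_product, card_product, sq]
      _ = ∑ q ∈ B i ×ˢ B i, #{j ∈ T | q ∈ B j ×ˢ B j} :=
          sum_card_inter_eq_sum_card_filter_mem _ T _
      _ = ∑ x ∈ B i, ∑ y ∈ B i, #{j ∈ T | x ∈ B j ∧ y ∈ B j} := by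
          simp only [sum_product, mem_product]
      _ = #T * l ^ 2 := by
          rw [sum_congr rfl fun x hx => hD.sum_card_filter_univ_erase_mem_and_mem hk hl hsym hx,
            sum_const, hD.card_block, smul_eq_mul, hT, sq, ← mul_assoc (Fintype.card α - 1), hC,
            mul_assoc]

end IsDesign

end Incidence

section Domination

variable {B : ι → Finset α} {x : α} {i : ι}

theorem incGraph_adj_inl_inr_s19 : (incGraph B).Adj (.inl x) (.inr i) ↔ x ∈ B i := by
  simp [incGraph]

theorem incGraph_adj_inr_inl_s19 : (incGraph B).Adj (.inr i) (.inl x) ↔ x ∈ B i := by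
  simp [incGraph]

variable [Fintype ι] [DecidableEq α] [DecidableEq ι]

variable (B) in
def flagDomSet (i₀ : ι) (p : α) : Finset (α ⊕ ι) :=
  ((B i₀).erase p).disjSum ((univ.filter fun i => p ∈ B i).erase i₀)

theorem isDomSet_flagDomSet {i₀ : ι} {p : α} (hp : p ∈ B i₀)
    (hjoin : ∀ x y, x ≠ y → ∃ i, x ∈ B i ∧ y ∈ B i)
    (hmeet : ∀ i j, i ≠ j → (B i ∩ B j).Nonempty)
    (hpoints : ((B i₀).erase p).Nonempty)
    (hlines : ((univ.filter fun i => p ∈ B i).erase i₀).Nonempty) :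
    IsDomSet (incGraph B) (flagDomSet B i₀ p) := by
  rintro (x | j) hv
  · rw [flagDomSet, inl_mem_disjSum] at hv
    by_cases hxp : x = p
    · obtain ⟨j, hj⟩ := hlines
      refine ⟨.inr j, inr_mem_disjSum.mpr hj, incGraph_adj_inl_inr_s19.mpr ?_⟩
      simpa [hxp] using (mem_erase.mp hj).2
    · obtain ⟨j, hxj, hpj⟩ := hjoin x p hxp
      have hj : j ≠ i₀ := by
        rintro rfl
        exact hv (mem_erase.mpr ⟨hxp, hxj⟩)
      exact ⟨.inr j, inr_mem_disjSum.mpr (by simp [hj, hpj]), incGraph_adj_inl_inr_s19.mpr hxj⟩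
  · rw [flagDomSet, inr_mem_disjSum] at hv
    by_cases hj : j = i₀
    · subst hj
      obtain ⟨y, hy⟩ := hpoints
      exact ⟨.inl y, inl_mem_disjSum.mpr hy, incGraph_adj_inr_inl_s19.mpr (mem_of_mem_erase hy)⟩
    · obtain ⟨y, hy⟩ := hmeet i₀ j (Ne.symm hj)
      obtain ⟨hy₀, hyj⟩ := mem_inter.mp hy
      have hyp : y ≠ p := by
        rintro rfl
        exact hv (by simp [hj, hyj])
      exact ⟨.inl y, inl_mem_disjSum.mpr (mem_erase.mpr ⟨hyp, hy₀⟩),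
        incGraph_adj_inr_inl_s19.mpr hyj⟩

end Domination

/-- For a symmetric `(v,k,λ)`-design (one whose number of blocks equals
`v`), `γ(D) ≤ 2(k - 1)`. -/
theorem stmt19 [Fintype α] [Fintype ι] [DecidableEq α]
    (B : ι → Finset α) (v k l : ℕ)
    (hv : Fintype.card α = v)
    (hk2 : 2 ≤ k) (hkv : k < v) (hl : 1 ≤ l)
    (hblock : ∀ i, (B i).card = k)
    (hpair : ∀ x y : α, x ≠ y →
      (Finset.univ.filter fun i => x ∈ B i ∧ y ∈ B i).card = l)
    (hsym : Fintype.card ι = v) :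
    domNum (incGraph B) ≤ 2 * (k - 1) := by
  classical
  have hD : IsDesign B k l := ⟨hblock, hpair⟩
  have hsym' : Fintype.card ι = Fintype.card α := hsym.trans hv.symm
  obtain ⟨i₀⟩ : Nonempty ι := Fintype.card_pos_iff.mp (by omega)
  obtain ⟨p, hp⟩ : (B i₀).Nonempty := card_pos.mp (by rw [hblock]; omega)
  have hpoints : #((B i₀).erase p) = k - 1 := by rw [card_erase_of_mem hp, hblock]
  have hlines : #((univ.filter fun i => p ∈ B i).erase i₀) = k - 1 := by
    rw [card_erase_of_mem (by simpa), hD.card_filter_mem hk2 hsym' p]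
  refine Nat.sInf_le ⟨flagDomSet B i₀ p, isDomSet_flagDomSet hp ?_ ?_ ?_ ?_, ?_⟩
  · intro x y hxy
    obtain ⟨i, hi⟩ := card_pos.mp (hpair x y hxy ▸ hl)
    exact ⟨i, (mem_filter.mp hi).2⟩
  · exact fun i j hij => card_pos.mp (hD.card_inter_eq hk2 hl hsym' hij ▸ hl)
  · exact card_pos.mp (by omega)
  · exact card_pos.mp (by omega)
  · rw [flagDomSet, card_disjSum, hpoints, hlines, two_mul]
end
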